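/- arXiv:2001.06143 — 3 statements merged into one kernel-verified Lean document; each statement's English description precedes it below -/
import Mathlib

section
/- Let n and r be integers with 1 ≤ r ≤ n. Then the inequality C(2n, n-r+1) - 2·C(2n, n-r-1) + C(2n, n-r-3) > 0 holds if and only if n < 2r(r+2), where C(a,b) denotes the binomial coefficient (taken to be 0 when b < 0). -/
/-- Binomial coefficient `C(a, b)` with an integer bottom index,
taken to be `0` when `b < 0`. -/
def zchoose (a : ℕ) (b : ℤ) : ℤ :=
  if b < 0 then 0 else (a.choose b.toNat : ℤ)

private lemma key (N j : ℕ) :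
    (N.choose (j + 1) : ℤ) * ((j : ℤ) + 1) = (N.choose j : ℤ) * ((N : ℤ) - j) := by
  rcases le_or_gt j N with h | h
  · have h2 := Nat.choose_succ_right_eq N j
    zify [h] at h2
    exact h2
  · rw [Nat.choose_eq_zero_of_lt h, Nat.choose_eq_zero_of_lt (by omega)]
    ring

set_option maxHeartbeats 1000000 in
theorem stmt_7 (n r : ℤ) (hr1 : 1 ≤ r) (hrn : r ≤ n) :
    0 < zchoose (2 * n).toNat (n - r + 1)
          - 2 * zchoose (2 * n).toNat (n - r - 1)
          + zchoose (2 * n).toNat (n - r - 3)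
      ↔ n < 2 * r * (r + 2) := by
  set N := (2 * n).toNat with hNdef
  have hN : (N : ℤ) = 2 * n := Int.toNat_of_nonneg (by omega)
  clear_value N
  rcases lt_or_ge (n - r) 3 with hcase | hcase
  · -- small cases : n - r = 0, 1, 2
    have hlo : 0 ≤ n - r := by omega
    interval_cases h : (n - r)
    · -- n - r = 0
      rw [show (0:ℤ) + 1 = 1 by norm_num, show (0:ℤ) - 1 = -1 by norm_num,
        show (0:ℤ) - 3 = -3 by norm_num]
      simp only [zchoose, if_neg (by norm_num : ¬ (1:ℤ) < 0),
        if_pos (by norm_num : (-1:ℤ) < 0), if_pos (by norm_num : (-3:ℤ) < 0)]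
      norm_num [Nat.choose_one_right]
      constructor
      · intro _; nlinarith
      · intro _; omega
    · -- n - r = 1
      have e1 : zchoose N 2 = ((N.choose 2 : ℕ) : ℤ) := by
        rw [zchoose, if_neg (by norm_num)]
        rfl
      have e2 : zchoose N 0 = 1 := by
        rw [zchoose, if_neg (by norm_num)]
        simp
      have e3 : zchoose N (-2) = 0 := by rw [zchoose, if_pos (by norm_num)]
      rw [show (1:ℤ) + 1 = 2 by norm_num, show (1:ℤ) - 1 = 0 by norm_num,
        show (1:ℤ) - 3 = -2 by norm_num, e1, e2, e3]
      have h1 := key N 0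
      have h2 := key N 1
      rw [hN] at h1 h2
      norm_num at h1 h2
      rw [h1] at h2
      have hn2 : 2 ≤ n := by omega
      constructor
      · intro _; nlinarith
      · intro _; nlinarith
    · -- n - r = 2
      have e1 : zchoose N 3 = ((N.choose 3 : ℕ) : ℤ) := by
        rw [zchoose, if_neg (by norm_num)]
        rfl
      have e2 : zchoose N 1 = ((N.choose 1 : ℕ) : ℤ) := by
        rw [zchoose, if_neg (by norm_num)]
        rfl
      have e3 : zchoose N (-1) = 0 := by rw [zchoose, if_pos (by norm_num)]
      rw [show (2:ℤ) + 1 = 3 by norm_num, show (2:ℤ) - 1 = 1 by norm_num,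
        show (2:ℤ) - 3 = -1 by norm_num, e1, e2, e3]
      have h1 := key N 0
      have h2 := key N 1
      have h3 := key N 2
      rw [hN] at h1 h2 h3
      norm_num at h1 h2 h3
      rw [h1] at h2
      have h6 : (N.choose 3 : ℤ) * 6 = 2 * n * (2 * n - 1) * (2 * n - 2) := by
        linear_combination 2 * h3 + (2 * n - 2) * h2
      rw [Nat.choose_one_right, hN]
      have hn3 : 3 ≤ n := by omega
      have hr : r = n - 2 := by omega
      constructor
      · intro _
        nlinarith [h6, mul_nonneg (mul_nonneg (by omega : (0:ℤ) ≤ n - 3) (by omega : (0:ℤ) ≤ n)) (by omega : (0:ℤ) ≤ n)]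
      · intro _
        nlinarith [h6, mul_nonneg (mul_nonneg (by omega : (0:ℤ) ≤ n - 3) (by omega : (0:ℤ) ≤ n)) (by omega : (0:ℤ) ≤ n)]
  · -- main case : n - r ≥ 3
    obtain ⟨j, hj⟩ := Int.eq_ofNat_of_zero_le (show (0:ℤ) ≤ n - r - 3 by omega)
    have E1 : zchoose N (n - r + 1) = (N.choose (j + 4) : ℤ) := by
      rw [zchoose, if_neg (by omega), show (n - r + 1).toNat = j + 4 by omega]
    have E2 : zchoose N (n - r - 1) = (N.choose (j + 2) : ℤ) := by
      rw [zchoose, if_neg (by omega), show (n - r - 1).toNat = j + 2 by omega]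
    have E3 : zchoose N (n - r - 3) = (N.choose j : ℤ) := by
      rw [zchoose, if_neg (by omega), show (n - r - 3).toNat = j by omega]
    rw [E1, E2, E3]
    have h1 := key N j
    have h2 := key N (j + 1)
    have h3 := key N (j + 2)
    have h4 := key N (j + 3)
    rw [show j + 1 + 1 = j + 2 by omega] at h2
    rw [show j + 2 + 1 = j + 3 by omega] at h3
    rw [show j + 3 + 1 = j + 4 by omega] at h4
    push_cast at h1 h2 h3 h4
    rw [hN, ← hj] at h1 h2 h3 h4
    have main : ((n:ℤ) - r - 2) * ((n:ℤ) - r - 1) * (n - r) * (n - r + 1) *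
        ((N.choose (j + 4) : ℤ) - 2 * (N.choose (j + 2) : ℤ) + (N.choose j : ℤ))
        = (N.choose j : ℤ) * (4 * (n + 1) * (2 * n + 1) * (2 * r * (r + 2) - n)) := by
      linear_combination ((n - r - 2) * (n - r - 1) * (n - r)) * h4
        + ((n - r - 2) * (n - r - 1) * (n + r)) * h3
        + ((n - r - 2) * ((n + r) * (n + r + 1) - 2 * (n - r) * (n - r + 1))) * h2
        + ((n + r + 2) * ((n + r) * (n + r + 1) - 2 * (n - r) * (n - r + 1))) * h1
    have hjN : j ≤ N := by omega
    have hc0 : 0 < (N.choose j : ℤ) := by exact_mod_cast Nat.choose_pos hjN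
    have hpos : 0 < ((n:ℤ) - r - 2) * ((n:ℤ) - r - 1) * (n - r) * (n - r + 1) := by
      apply mul_pos (mul_pos (mul_pos _ _) _) <;> omega
    constructor
    · intro h
      have h5 : 0 < (N.choose j : ℤ) * (4 * (n + 1) * (2 * n + 1) * (2 * r * (r + 2) - n)) := by
        rw [← main]; exact mul_pos hpos h
      have h6 : 0 < 4 * (n + 1) * (2 * n + 1) * (2 * r * (r + 2) - n) :=
        pos_of_mul_pos_right h5 hc0.le
      have hA : (0:ℤ) < 4 * (n + 1) * (2 * n + 1) := by nlinarith
      have h7 : 0 < 2 * r * (r + 2) - n := pos_of_mul_pos_right h6 hA.le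
      omega
    · intro h
      have h6 : 0 < (N.choose j : ℤ) * (4 * (n + 1) * (2 * n + 1) * (2 * r * (r + 2) - n)) := by
        apply mul_pos hc0
        apply mul_pos (mul_pos (mul_pos _ _) _) <;> nlinarith
      rw [← main] at h6
      exact pos_of_mul_pos_right h6 hpos.le
end

section
/- For every integer e ≥ 1, C(31e+7, 7) - 10·C(24e+6, 7) + 45·C(17e+5, 7) - 120·C(10e+4, 7) + 210·C(3e+3, 7) < 0, where C(a,b) is the binomial coefficient with C(a,b) = 0 when a < b. -/
lemma key7 (m : ℕ) : 5040 * (Nat.choose (m + 6) 7 : ℤ) =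
    (m:ℤ) * ((m:ℤ)+1) * ((m:ℤ)+2) * ((m:ℤ)+3) * ((m:ℤ)+4) * ((m:ℤ)+5) * ((m:ℤ)+6) := by
  have h : (m+6).descFactorial 7 = Nat.factorial 7 * (m+6).choose 7 :=
    Nat.descFactorial_eq_factorial_mul_choose (m+6) 7
  have h2 : (m+6).descFactorial 7 = m*(m+1)*(m+2)*(m+3)*(m+4)*(m+5)*(m+6) := by
    show (m+6-6) * ((m+6-5) * ((m+6-4) * ((m+6-3) * ((m+6-2) * ((m+6-1) * ((m+6-0) * 1)))))) = _
    rw [show m+6-6 = m by omega, show m+6-5 = m+1 by omega, show m+6-4 = m+2 by omega,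
      show m+6-3 = m+3 by omega, show m+6-2 = m+4 by omega, show m+6-1 = m+5 by omega,
      Nat.sub_zero]
    ring
  rw [h2, show Nat.factorial 7 = 5040 from rfl] at h
  have h3 := congrArg (Nat.cast : ℕ → ℤ) h
  push_cast at h3
  linarith [h3]

theorem stmt_16 (e : ℕ) (he : 1 ≤ e) :
    (Nat.choose (31 * e + 7) 7 : ℤ)
        - 10 * (Nat.choose (24 * e + 6) 7 : ℤ)
        + 45 * (Nat.choose (17 * e + 5) 7 : ℤ)
        - 120 * (Nat.choose (10 * e + 4) 7 : ℤ)
        + 210 * (Nat.choose (3 * e + 3) 7 : ℤ) < 0 := by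
  obtain ⟨f, rfl⟩ : ∃ f, e = f + 1 := ⟨e - 1, by omega⟩
  rw [show 31 * (f+1) + 7 = (31*f+32) + 6 by ring, show 24 * (f+1) + 6 = (24*f+24) + 6 by ring,
    show 17 * (f+1) + 5 = (17*f+16) + 6 by ring, show 10 * (f+1) + 4 = (10*f+8) + 6 by ring,
    show 3 * (f+1) + 3 = (3*f) + 6 by ring]
  have h1 := key7 (31*f+32)
  have h2 := key7 (24*f+24)
  have h3 := key7 (17*f+16)
  have h4 := key7 (10*f+8)
  have h5 := key7 (3*f)
  push_cast at h1 h2 h3 h4 h5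
  set x : ℤ := (f : ℤ) with hxdef
  have hx : 0 ≤ x := Int.natCast_nonneg f
  have hQ : 5040 * ((Nat.choose (31*f+32 + 6) 7 : ℤ)
        - 10 * (Nat.choose (24*f+24 + 6) 7 : ℤ)
        + 45 * (Nat.choose (17*f+16 + 6) 7 : ℤ)
        - 120 * (Nat.choose (10*f+8 + 6) 7 : ℤ)
        + 210 * (Nat.choose (3*f + 6) 7 : ℤ))
      = -1086400574*x^7 - 8519657440*x^6 - 28631702834*x^5 - 53447942800*x^4
        - 59848887056*x^3 - 40195462720*x^2 - 14990601696*x - 2394524160 := by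
    linear_combination h1 - 10*h2 + 45*h3 - 120*h4 + 210*h5
  nlinarith [hQ, mul_nonneg hx hx, pow_nonneg hx 3, pow_nonneg hx 4, pow_nonneg hx 5,
    pow_nonneg hx 6, pow_nonneg hx 7, sq_nonneg x]
end

section
/- For every integer e ≥ 0, C(31e+20, 7) - 10·C(24e+16, 7) + 45·C(17e+12, 7) - 120·C(10e+8, 7) + 210·C(3e+4, 7) < 0, where C(a,b) is the binomial coefficient with C(a,b) = 0 when a < b. -/
lemma choose7_key (n : ℕ) : ((n + 7).choose 7 : ℤ) * 5040 =
    ((n:ℤ)+1)*((n:ℤ)+2)*((n:ℤ)+3)*((n:ℤ)+4)*((n:ℤ)+5)*((n:ℤ)+6)*((n:ℤ)+7) := by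
  have h := Nat.descFactorial_eq_factorial_mul_choose (n + 7) 7
  have h2 : (n + 7).descFactorial 7 = (n+1)*(n+2)*(n+3)*(n+4)*(n+5)*(n+6)*(n+7) := by
    simp [Nat.descFactorial]
    ring
  rw [h2] at h
  have h3 := congrArg (Nat.cast : ℕ → ℤ) h
  push_cast at h3
  norm_num [Nat.factorial] at h3
  linarith [h3]

theorem stmt_17 (e : ℕ) :
    (Nat.choose (31 * e + 20) 7 : ℤ)
        - 10 * (Nat.choose (24 * e + 16) 7 : ℤ)
        + 45 * (Nat.choose (17 * e + 12) 7 : ℤ)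
        - 120 * (Nat.choose (10 * e + 8) 7 : ℤ)
        + 210 * (Nat.choose (3 * e + 4) 7 : ℤ) < 0 := by
  rcases e with _ | f
  · norm_num [Nat.choose]
  · have h1 := choose7_key (31 * f + 31 + 13)
    have h2 := choose7_key (24 * f + 24 + 9)
    have h3 := choose7_key (17 * f + 17 + 5)
    have h4 := choose7_key (10 * f + 10 + 1)
    have h5 := choose7_key (3 * f)
    have e1 : 31 * (f + 1) + 20 = (31 * f + 31 + 13) + 7 := by ring
    have e2 : 24 * (f + 1) + 16 = (24 * f + 24 + 9) + 7 := by ring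
    have e3 : 17 * (f + 1) + 12 = (17 * f + 17 + 5) + 7 := by ring
    have e4 : 10 * (f + 1) + 8 = (10 * f + 10 + 1) + 7 := by ring
    have e5 : 3 * (f + 1) + 4 = (3 * f) + 7 := by ring
    rw [e1, e2, e3, e4, e5]
    push_cast at h1 h2 h3 h4 h5
    set x : ℤ := (f : ℤ) with hxdef
    have hx : 0 ≤ x := Nat.cast_nonneg f
    have key : ((((31 * f + 31 + 13) + 7).choose 7 : ℤ)
        - 10 * (((24 * f + 24 + 9) + 7).choose 7 : ℤ)
        + 45 * (((17 * f + 17 + 5) + 7).choose 7 : ℤ)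
        - 120 * (((10 * f + 10 + 1) + 7).choose 7 : ℤ)
        + 210 * (((3 * f) + 7).choose 7 : ℤ)) * 5040
        = -21390112800 - 98064642060*x - 192485042946*x^2 - 209710753406*x^3
          - 136978235940*x^4 - 53645002040*x^5 - 11664494394*x^6 - 1086400574*x^7 := by
      push_cast
      linear_combination h1 - 10*h2 + 45*h3 - 120*h4 + 210*h5
    have hneg : -21390112800 - 98064642060*x - 192485042946*x^2 - 209710753406*x^3
          - 136978235940*x^4 - 53645002040*x^5 - 11664494394*x^6 - 1086400574*x^7 < 0 := by
      have p2 : 0 ≤ x^2 := pow_nonneg hx 2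
      have p3 : 0 ≤ x^3 := pow_nonneg hx 3
      have p4 : 0 ≤ x^4 := pow_nonneg hx 4
      have p5 : 0 ≤ x^5 := pow_nonneg hx 5
      have p6 : 0 ≤ x^6 := pow_nonneg hx 6
      have p7 : 0 ≤ x^7 := pow_nonneg hx 7
      linarith
    push_cast
    nlinarith [key, hneg]
end
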